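/- arXiv:gr-qc/0608063 — 2 statements merged into one kernel-verified Lean document; each statement's English description precedes it below -/
import Mathlib

section
/- Let X be a weakly distinguishing chronological set. The set X̄₀ consisting of i[X] together with all pairs (I⁻[ς], ∅) for future chains ς in X having no endpoint in i[X], and all pairs (∅, I⁺[ς]) for past chains ς in X having no endpoint in i[X], is a completion of X that belongs to C_X*: no removal of a single boundary point of X̄₀ leaves a completion. In particular C_X* is nonempty. -/
namespace CausalBoundary

variable {X : Type*}

/-- The past of a set of points: `I⁻[S]`. -/
def pastOf (r : X → X → Prop) (S : Set X) : Set X := {x | ∃ s ∈ S, r x s}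

/-- The future of a set of points: `I⁺[S]`. -/
def futureOf (r : X → X → Prop) (S : Set X) : Set X := {x | ∃ s ∈ S, r s x}

/-- The past of a point: `I⁻(x)`. -/
def pastPt (r : X → X → Prop) (x : X) : Set X := {y | r y x}

/-- The future of a point: `I⁺(x)`. -/
def futPt (r : X → X → Prop) (x : X) : Set X := {y | r x y}

/-- A past set: `P = I⁻[P]`. -/
def IsPastSet (r : X → X → Prop) (P : Set X) : Prop := P = pastOf r P

/-- A future set: `F = I⁺[F]`. -/
def IsFutureSet (r : X → X → Prop) (F : Set X) : Prop := F = futureOf r F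

/-- An indecomposable past set (IP): a nonempty past set which is not the union of
two proper subsets which are both past sets. -/
def IsIP (r : X → X → Prop) (P : Set X) : Prop :=
  IsPastSet r P ∧ P.Nonempty ∧
    ¬ ∃ P₁ P₂ : Set X, IsPastSet r P₁ ∧ IsPastSet r P₂ ∧ P₁ ⊂ P ∧ P₂ ⊂ P ∧ P = P₁ ∪ P₂

/-- An indecomposable future set (IF). -/
def IsIF (r : X → X → Prop) (F : Set X) : Prop :=
  IsFutureSet r F ∧ F.Nonempty ∧
    ¬ ∃ F₁ F₂ : Set X, IsFutureSet r F₁ ∧ IsFutureSet r F₂ ∧ F₁ ⊂ F ∧ F₂ ⊂ F ∧ F = F₁ ∪ F₂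

/-- `dec(P)`: the set of all maximal IPs (under inclusion) contained in `P`. -/
def decP (r : X → X → Prop) (P : Set X) : Set (Set X) :=
  {Q | IsIP r Q ∧ Q ⊆ P ∧ ∀ Q' : Set X, IsIP r Q' → Q' ⊆ P → Q ⊆ Q' → Q = Q'}

/-- `dec(F)` for future sets: the set of all maximal IFs contained in `F`. -/
def decF (r : X → X → Prop) (F : Set X) : Set (Set X) :=
  {Q | IsIF r Q ∧ Q ⊆ F ∧ ∀ Q' : Set X, IsIF r Q' → Q' ⊆ F → Q ⊆ Q' → Q = Q'}

/-- Inferior limit of a sequence of sets: `LI(Aₙ) = ∪ₙ ∩_{k ≥ n} A_k`. -/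
def seqLI (A : ℕ → Set X) : Set X := ⋃ n, ⋂ k, ⋂ (_ : n ≤ k), A k

/-- Superior limit of a sequence of sets: `LS(Aₙ) = ∩ₙ ∪_{k ≥ n} A_k`. -/
def seqLS (A : ℕ → Set X) : Set X := ⋂ n, ⋃ k, ⋃ (_ : n ≤ k), A k

/-- The limit operator `L̂`: `P ∈ L̂(σ)` iff `P` is an IP with `P ⊆ LI(I⁻(σₙ))` and
`P` is a maximal IP within `LS(I⁻(σₙ))`. -/
def Lhat (r : X → X → Prop) (σ : ℕ → X) : Set (Set X) :=
  {P | IsIP r P ∧ P ⊆ seqLI (fun n => pastPt r (σ n)) ∧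
    P ⊆ seqLS (fun n => pastPt r (σ n)) ∧
    ∀ P' : Set X, IsIP r P' → P' ⊆ seqLS (fun n => pastPt r (σ n)) → P ⊆ P' → P = P'}

/-- The limit operator `Ľ`, dual to `L̂`. -/
def Lcheck (r : X → X → Prop) (σ : ℕ → X) : Set (Set X) :=
  {F | IsIF r F ∧ F ⊆ seqLI (fun n => futPt r (σ n)) ∧
    F ⊆ seqLS (fun n => futPt r (σ n)) ∧
    ∀ F' : Set X, IsIF r F' → F' ⊆ seqLS (fun n => futPt r (σ n)) → F ⊆ F' → F = F'}

/-- The limit operator `L`: `x ∈ L(σ)` iff `dec(I⁻(x)) ⊆ L̂(σ)` and `dec(I⁺(x)) ⊆ Ľ(σ)`. -/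
def limitOp (r : X → X → Prop) (σ : ℕ → X) : Set X :=
  {x | decP r (pastPt r x) ⊆ Lhat r σ ∧ decF r (futPt r x) ⊆ Lcheck r σ}

/-- A future chain: a sequence with `xₙ ≪ xₙ₊₁`. -/
def IsFutureChain (r : X → X → Prop) (c : ℕ → X) : Prop := ∀ n, r (c n) (c (n + 1))

/-- A past chain: a sequence with `xₙ₊₁ ≪ xₙ`. -/
def IsPastChain (r : X → X → Prop) (c : ℕ → X) : Prop := ∀ n, r (c (n + 1)) (c n)

/-- A (future or past) chain. -/
def IsChronChain (r : X → X → Prop) (c : ℕ → X) : Prop :=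
  IsFutureChain r c ∨ IsPastChain r c

/-- `(X, r)` is a chronological set: `r` is transitive and irreflexive, there are no
isolates, and there is a countable dense subset. -/
def IsChronSet (r : X → X → Prop) : Prop :=
  Transitive r ∧ Irreflexive r ∧ (∀ x : X, ∃ y : X, r x y ∨ r y x) ∧
    ∃ D : Set X, D.Countable ∧ ∀ x y : X, r x y → ∃ d ∈ D, r x d ∧ r d y

/-- Weakly distinguishing: points with the same past and future coincide. -/
def WeaklyDist (r : X → X → Prop) : Prop :=
  ∀ x y : X, pastPt r x = pastPt r y → futPt r x = futPt r y → x = y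

/-- The natural injection `i(x) = (I⁻(x), I⁺(x))` into `X_p × X_f`. -/
def inj (r : X → X → Prop) (x : X) : Set X × Set X := (pastPt r x, futPt r x)

/-- `(P, F) ∈ X_p × X_f` is an endpoint of a future chain `c` if `P = I⁻[c]` and
`dec(F) ⊆ Ľ(c)`; of a past chain if `F = I⁺[c]` and `dec(P) ⊆ L̂(c)`. -/
def IsEndpoint (r : X → X → Prop) (c : ℕ → X) (p : Set X × Set X) : Prop :=
  IsPastSet r p.1 ∧ IsFutureSet r p.2 ∧
    ((IsFutureChain r c ∧ p.1 = pastOf r (Set.range c) ∧ decF r p.2 ⊆ Lcheck r c) ∨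
     (IsPastChain r c ∧ p.2 = futureOf r (Set.range c) ∧ decP r p.1 ⊆ Lhat r c))

/-- `X^end`: the union of `i[X]` with all endpoints of all chains in `X`. -/
def endSet (r : X → X → Prop) : Set (Set X × Set X) :=
  Set.range (inj r) ∪ {p | ∃ c : ℕ → X, IsChronChain r c ∧ IsEndpoint r c p}

/-- A completion of `X`: a set `X̄` with `i[X] ⊆ X̄ ⊆ X^end` such that every chain
in `X` has some endpoint in `X̄`. -/
def IsCompletion (r : X → X → Prop) (Xb : Set (Set X × Set X)) : Prop :=
  Set.range (inj r) ⊆ Xb ∧ Xb ⊆ endSet r ∧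
    ∀ c : ℕ → X, IsChronChain r c → ∃ p ∈ Xb, IsEndpoint r c p

/-- The chronology on pairs: `(P,F) ≪̄ (P',F')` iff `F ∩ P' ≠ ∅`. -/
def llbar (p q : Set X × Set X) : Prop := (p.2 ∩ q.1).Nonempty

/-- The chronology `≪̄` on a completion, viewed on the subtype. -/
def subRel (Xb : Set (Set X × Set X)) (a b : ↥Xb) : Prop := llbar a.1 b.1

/-- The injection of `X` into a completion `X̄` (as a subtype). -/
def iota (r : X → X → Prop) (Xb : Set (Set X × Set X))
    (h : Set.range (inj r) ⊆ Xb) (x : X) : ↥Xb := ⟨inj r x, h ⟨x, rfl⟩⟩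


/-- `X` is (chronologically) complete: every chain in `X` has some endpoint in `i[X]`. -/
def IsCompleteChron (r : X → X → Prop) : Prop :=
  ∀ c : ℕ → X, IsChronChain r c → ∃ y : X, IsEndpoint r c (inj r y)

/-- The completion formed by `i[X]` together with the pairs `(I⁻[ς], ∅)` for future
chains `ς` with no endpoint in `i[X]`, and `(∅, I⁺[ς])` for past chains `ς` with no
endpoint in `i[X]`. -/
def Xbar0 (r : X → X → Prop) : Set (Set X × Set X) :=
  Set.range (inj r) ∪
    {p | ∃ c : ℕ → X, IsFutureChain r c ∧ (¬ ∃ x : X, IsEndpoint r c (inj r x)) ∧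
      p = (pastOf r (Set.range c), (∅ : Set X))} ∪
    {p | ∃ c : ℕ → X, IsPastChain r c ∧ (¬ ∃ x : X, IsEndpoint r c (inj r x)) ∧
      p = ((∅ : Set X), futureOf r (Set.range c))}

/-- `X̄ ∈ C_X*`: `X̄` is a completion such that the removal of any boundary point no
longer leaves a completion. -/
def InCstar (r : X → X → Prop) (Xb : Set (Set X × Set X)) : Prop :=
  IsCompletion r Xb ∧
    ∀ p ∈ Xb \ Set.range (inj r), ¬ IsCompletion r (Xb \ {p})

end CausalBoundary

open CausalBoundary

section Aux

variable {X : Type*} {r : X → X → Prop}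

lemma futureOf_empty : futureOf r (∅ : Set X) = ∅ := by
  ext x; simp [futureOf]

lemma pastOf_empty : pastOf r (∅ : Set X) = ∅ := by
  ext x; simp [pastOf]

lemma decF_empty_subset (S : Set (Set X)) : decF r (∅ : Set X) ⊆ S := by
  rintro Q ⟨⟨_, ⟨x, hx⟩, _⟩, hsub, _⟩
  exact (hsub hx).elim

lemma decP_empty_subset (S : Set (Set X)) : decP r (∅ : Set X) ⊆ S := by
  rintro Q ⟨⟨_, ⟨x, hx⟩, _⟩, hsub, _⟩
  exact (hsub hx).elim

lemma isPastSet_pastOf_chain (ht : Transitive r) {c : ℕ → X} (hc : IsFutureChain r c) :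
    IsPastSet r (pastOf r (Set.range c)) := by
  unfold IsPastSet
  ext x
  constructor
  · rintro ⟨s, ⟨n, rfl⟩, hxs⟩
    exact ⟨c n, ⟨c (n + 1), ⟨n + 1, rfl⟩, hc n⟩, hxs⟩
  · rintro ⟨s, ⟨t, ht', hst⟩, hxs⟩
    exact ⟨t, ht', ht hxs hst⟩

lemma isFutureSet_futureOf_chain (ht : Transitive r) {c : ℕ → X} (hc : IsPastChain r c) :
    IsFutureSet r (futureOf r (Set.range c)) := by
  unfold IsFutureSet
  ext x
  constructor
  · rintro ⟨s, ⟨n, rfl⟩, hxs⟩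
    exact ⟨c n, ⟨c (n + 1), ⟨n + 1, rfl⟩, hc n⟩, hxs⟩
  · rintro ⟨s, ⟨t, ht', hst⟩, hxs⟩
    exact ⟨t, ht', ht hst hxs⟩

lemma endpoint_fc (ht : Transitive r) {c : ℕ → X} (hc : IsFutureChain r c) :
    IsEndpoint r c (pastOf r (Set.range c), (∅ : Set X)) := by
  refine ⟨isPastSet_pastOf_chain ht hc, ?_, Or.inl ⟨hc, rfl, decF_empty_subset _⟩⟩
  unfold IsFutureSet
  exact futureOf_empty.symm

lemma endpoint_pc (ht : Transitive r) {c : ℕ → X} (hc : IsPastChain r c) :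
    IsEndpoint r c ((∅ : Set X), futureOf r (Set.range c)) := by
  refine ⟨?_, isFutureSet_futureOf_chain ht hc, Or.inr ⟨hc, rfl, decP_empty_subset _⟩⟩
  unfold IsPastSet
  exact pastOf_empty.symm

lemma not_both_chains (ht : Transitive r) (hi : Irreflexive r) {c : ℕ → X}
    (hf : IsFutureChain r c) (hp : IsPastChain r c) : False :=
  hi _ (ht (hf 0) (hp 0))

end Aux

/-- Section 7: `X̄₀` is a completion of `X` belonging to `C_X*`;
in particular `C_X*` is nonempty. -/
theorem stmt16 {X : Type*} (r : X → X → Prop) (h : IsChronSet r) (hw : WeaklyDist r) :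
    InCstar r (Xbar0 r) := by
  obtain ⟨htr, hirr, -, -⟩ := h
  have hcompl : IsCompletion r (Xbar0 r) := by
    refine ⟨fun p hp => Or.inl (Or.inl hp), ?_, ?_⟩
    · rintro p ((hp | ⟨c, hc, -, rfl⟩) | ⟨c, hc, -, rfl⟩)
      · exact Or.inl hp
      · exact Or.inr ⟨c, Or.inl hc, endpoint_fc htr hc⟩
      · exact Or.inr ⟨c, Or.inr hc, endpoint_pc htr hc⟩
    · intro c hc
      by_cases hend : ∃ x : X, IsEndpoint r c (inj r x)
      · obtain ⟨x, hx⟩ := hend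
        exact ⟨inj r x, Or.inl (Or.inl ⟨x, rfl⟩), hx⟩
      · rcases hc with hfc | hpc
        · exact ⟨(pastOf r (Set.range c), (∅ : Set X)),
            Or.inl (Or.inr ⟨c, hfc, hend, rfl⟩), endpoint_fc htr hfc⟩
        · exact ⟨((∅ : Set X), futureOf r (Set.range c)),
            Or.inr ⟨c, hpc, hend, rfl⟩, endpoint_pc htr hpc⟩
  refine ⟨hcompl, ?_⟩
  rintro p ⟨hpmem, hpnotinj⟩ hbad
  rcases hpmem with (hp | ⟨c, hc, hnoend, rfl⟩) | ⟨c, hc, hnoend, rfl⟩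
  · exact hpnotinj hp
  · -- p = (pastOf r (range c), ∅), c future chain
    obtain ⟨q, ⟨hqmem, hqne⟩, hqend⟩ := hbad.2.2 c (Or.inl hc)
    obtain ⟨hP, hF, hor⟩ := hqend
    have hq1 : q.1 = pastOf r (Set.range c) := by
      rcases hor with ⟨-, h1, -⟩ | ⟨hpc, -, -⟩
      · exact h1
      · exact (not_both_chains htr hirr hc hpc).elim
    rcases hqmem with (⟨x, rfl⟩ | ⟨c', -, -, hqeq⟩) | ⟨c', -, -, hqeq⟩
    · exact hnoend ⟨x, hP, hF, hor⟩
    · apply hqne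
      have hq2 : q.2 = (∅ : Set X) := by rw [hqeq]
      simp only [Set.mem_singleton_iff]
      exact Prod.ext hq1 hq2
    · have hq1' : q.1 = (∅ : Set X) := by rw [hqeq]
      have : c 0 ∈ pastOf r (Set.range c) := ⟨c 1, ⟨1, rfl⟩, hc 0⟩
      rw [← hq1, hq1'] at this
      exact this
  · -- p = (∅, futureOf r (range c)), c past chain
    obtain ⟨q, ⟨hqmem, hqne⟩, hqend⟩ := hbad.2.2 c (Or.inr hc)
    obtain ⟨hP, hF, hor⟩ := hqend
    have hq2 : q.2 = futureOf r (Set.range c) := by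
      rcases hor with ⟨hfc, -, -⟩ | ⟨-, h2, -⟩
      · exact (not_both_chains htr hirr hfc hc).elim
      · exact h2
    rcases hqmem with (⟨x, rfl⟩ | ⟨c', -, -, hqeq⟩) | ⟨c', -, -, hqeq⟩
    · exact hnoend ⟨x, hP, hF, hor⟩
    · have hq2' : q.2 = (∅ : Set X) := by rw [hqeq]
      have : c 0 ∈ futureOf r (Set.range c) := ⟨c 1, ⟨1, rfl⟩, hc 0⟩
      rw [← hq2, hq2'] at this
      exact this
    · apply hqne
      have hq1 : q.1 = (∅ : Set X) := by rw [hqeq]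
      simp only [Set.mem_singleton_iff]
      exact Prod.ext hq1 hq2
end

section
/- If X is a weakly distinguishing chronological set, then the partially ordered set (C_X*, ≤) has a minimal element: there exists a completion X̄ ∈ C_X* such that every X̄' ∈ C_X* with X̄' ≤ X̄ satisfies X̄' = X̄. -/
namespace CausalBoundary

variable {X : Type*}

/-- The boundary `∂(X) = X̄ \ i[X]` of a completion. -/
def bdry (r : X → X → Prop) (Xb : Set (Set X × Set X)) : Set (Set X × Set X) :=
  Xb \ Set.range (inj r)

/-- The order on completions: `A ≤ B` iff there is a partition of `∂_B(X)` into
pairwise disjoint sets `S p`, indexed by the boundary points `p` of `A`, such that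
(i) if a chain in `X` has some endpoint in `S p` then `p` is also an endpoint of that
chain, and (ii) whenever `S p = {q}` is a singleton with `p` and `q` endpoints of
exactly the same chains, `dec(p.1) ⊆ dec(q.1)` and `dec(p.2) ⊆ dec(q.2)`. -/
def CompLE (r : X → X → Prop) (A B : Set (Set X × Set X)) : Prop :=
  ∃ S : Set X × Set X → Set (Set X × Set X),
    (∀ p ∈ bdry r A, S p ⊆ bdry r B) ∧
    (∀ q ∈ bdry r B, ∃! p : Set X × Set X, p ∈ bdry r A ∧ q ∈ S p) ∧
    (∀ p ∈ bdry r A, ∀ c : ℕ → X, IsChronChain r c →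
      (∃ q ∈ S p, IsEndpoint r c q) → IsEndpoint r c p) ∧
    (∀ p ∈ bdry r A, ∀ q : Set X × Set X, S p = {q} →
      (∀ c : ℕ → X, IsChronChain r c → (IsEndpoint r c q ↔ IsEndpoint r c p)) →
      decP r p.1 ⊆ decP r q.1 ∧ decF r p.2 ⊆ decF r q.2)

end CausalBoundary

open CausalBoundary

namespace Stmt18Aux
open CausalBoundary Set

variable {X : Type*} {r : X → X → Prop} {F P : Set X} {c c' : ℕ → X}

/-- abstract density -/
def Dns (r : X → X → Prop) : Prop := ∀ x y, r x y → ∃ d, r x d ∧ r d y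

lemma dnsFlip (hd : Dns r) : Dns (flip r) := fun x y hxy => by
  obtain ⟨d, h1, h2⟩ := hd y x hxy; exact ⟨d, h2, h1⟩

lemma transFlip (ht : Transitive r) : Transitive (flip r) :=
  fun _ _ _ h1 h2 => ht h2 h1

-- flip bridges (definational)
lemma pastOf_flip (S : Set X) : pastOf r S = futureOf (flip r) S := rfl
lemma decP_flip (P : Set X) : decP r P = decF (flip r) P := rfl
lemma Lhat_flip (σ : ℕ → X) : Lhat r σ = Lcheck (flip r) σ := rfl
lemma isPastSet_flip : IsPastSet r P ↔ IsFutureSet (flip r) P := Iff.rfl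
lemma isIP_flip : IsIP r P ↔ IsIF (flip r) P := Iff.rfl
lemma pastChain_flip : IsPastChain r c ↔ IsFutureChain (flip r) c := Iff.rfl

lemma isFutureSet_futureOf (ht : Transitive r) (hd : Dns r) (S : Set X) :
    IsFutureSet r (futureOf r S) := by
  unfold IsFutureSet
  ext z
  constructor
  · rintro ⟨s, hs, hsz⟩
    obtain ⟨d, hsd, hdz⟩ := hd s z hsz
    exact ⟨d, ⟨s, hs, hsd⟩, hdz⟩
  · rintro ⟨w, ⟨s, hs, hsw⟩, hwz⟩
    exact ⟨s, hs, ht hsw hwz⟩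

lemma futmem (hF : IsFutureSet r F) {y : X} (hy : y ∈ F) :
    ∃ s ∈ F, r s y := by rw [hF] at hy; exact hy

lemma futclosed (hF : IsFutureSet r F) {y z : X} (hy : y ∈ F) (hyz : r y z) :
    z ∈ F := by
  have : z ∈ futureOf r F := ⟨y, hy, hyz⟩
  rwa [← hF] at this

lemma isFutureSet_empty : IsFutureSet r (∅ : Set X) := by
  unfold IsFutureSet futureOf; ext x; simp

lemma isPastSet_empty : IsPastSet r (∅ : Set X) := by
  unfold IsPastSet pastOf; ext x; simp

lemma isIF_of_directed (hF : IsFutureSet r F) (hne : F.Nonempty)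
    (hdir : ∀ x ∈ F, ∀ y ∈ F, ∃ z ∈ F, r z x ∧ r z y) : IsIF r F := by
  refine ⟨hF, hne, ?_⟩
  rintro ⟨F₁, F₂, h1, h2, hs1, hs2, hu⟩
  obtain ⟨a, haF, ha1⟩ := exists_of_ssubset hs1
  obtain ⟨b, hbF, hb2⟩ := exists_of_ssubset hs2
  obtain ⟨z, hzF, hza, hzb⟩ := hdir a haF b hbF
  have hz : z ∈ F₁ ∪ F₂ := hu ▸ hzF
  rcases hz with hz | hz
  · exact ha1 (futclosed h1 hz hza)
  · exact hb2 (futclosed h2 hz hzb)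

lemma directed_of_isIF (ht : Transitive r) (hd : Dns r) (hIF : IsIF r F) :
    ∀ x ∈ F, ∀ y ∈ F, ∃ z ∈ F, r z x ∧ r z y := by
  intro x hx y hy
  set Fx := futureOf r (F ∩ pastPt r x) with hFxdef
  have hFxfut : IsFutureSet r Fx := isFutureSet_futureOf ht hd _
  have hFxsub : Fx ⊆ F := by
    rintro z ⟨w, ⟨hwF, _⟩, hwz⟩
    exact futclosed hIF.1 hwF hwz
  by_cases hcase : Fx = F
  · have hyFx : y ∈ Fx := hcase ▸ hy
    obtain ⟨w, ⟨hwF, hwx⟩, hwy⟩ := hyFx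
    exact ⟨w, hwF, hwx, hwy⟩
  · exfalso
    apply hIF.2.2
    set F₂ := futureOf r (F \ Fx) with hF2def
    have hF2sub : F₂ ⊆ F := by
      rintro z ⟨w, ⟨hwF, _⟩, hwz⟩
      exact futclosed hIF.1 hwF hwz
    have hxF2 : x ∉ F₂ := by
      rintro ⟨t, ⟨htF, htFx⟩, htx⟩
      obtain ⟨w, hwF, hwt⟩ := futmem hIF.1 htF
      exact htFx ⟨w, ⟨hwF, ht hwt htx⟩, hwt⟩
    have hcover : F = Fx ∪ F₂ := by
      apply Subset.antisymm
      · intro z hz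
        obtain ⟨s, hsF, hsz⟩ := futmem hIF.1 hz
        by_cases hs : s ∈ Fx
        · exact Or.inl (futclosed hFxfut hs hsz)
        · exact Or.inr ⟨s, ⟨hsF, hs⟩, hsz⟩
      · exact union_subset hFxsub hF2sub
    refine ⟨Fx, F₂, hFxfut, isFutureSet_futureOf ht hd _, ?_, ?_, hcover⟩
    · exact ssubset_of_subset_of_ne hFxsub hcase
    · exact ssubset_of_subset_of_ne hF2sub (fun hEq => hxF2 (hEq ▸ hx))

lemma isIF_sUnion_chain (ht : Transitive r) (hd : Dns r) {C : Set (Set X)}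
    (hC : ∀ G ∈ C, IsIF r G) (hchain : IsChain (· ⊆ ·) C) (hne : C.Nonempty) :
    IsIF r (⋃₀ C) := by
  have hfut : IsFutureSet r (⋃₀ C) := by
    unfold IsFutureSet
    ext z
    constructor
    · rintro ⟨G, hG, hzG⟩
      obtain ⟨s, hs, hsz⟩ := futmem (hC G hG).1 hzG
      exact ⟨s, ⟨G, hG, hs⟩, hsz⟩
    · rintro ⟨s, ⟨G, hG, hsG⟩, hsz⟩
      exact ⟨G, hG, futclosed (hC G hG).1 hsG hsz⟩
  refine isIF_of_directed hfut ?_ ?_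
  · obtain ⟨G, hG⟩ := hne
    obtain ⟨x, hx⟩ := (hC G hG).2.1
    exact ⟨x, G, hG, hx⟩
  · rintro x ⟨G₁, hG₁, hx⟩ y ⟨G₂, hG₂, hy⟩
    rcases hchain.total hG₁ hG₂ with hle | hle
    · obtain ⟨z, hz, h1, h2⟩ := directed_of_isIF ht hd (hC G₂ hG₂) x (hle hx) y hy
      exact ⟨z, ⟨G₂, hG₂, hz⟩, h1, h2⟩
    · obtain ⟨z, hz, h1, h2⟩ := directed_of_isIF ht hd (hC G₁ hG₁) x hx y (hle hy)
      exact ⟨z, ⟨G₁, hG₁, hz⟩, h1, h2⟩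

lemma exists_isIF_subset (ht : Transitive r) (hd : Dns r)
    (hF : IsFutureSet r F) (hne : F.Nonempty) : ∃ G, IsIF r G ∧ G ⊆ F := by
  classical
  obtain ⟨x₀, hx₀⟩ := hne
  have hstep : ∀ y, y ∈ F → ∃ z, z ∈ F ∧ r z y := by
    intro y hy
    obtain ⟨s, hs, hsy⟩ := futmem hF hy
    exact ⟨s, hs, hsy⟩
  let g : X → X := fun y => if h : y ∈ F then (hstep y h).choose else y
  have hgmem : ∀ y, y ∈ F → g y ∈ F := by
    intro y hy
    simp only [g, dif_pos hy]
    exact (hstep y hy).choose_spec.1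
  have hgrel : ∀ y, y ∈ F → r (g y) y := by
    intro y hy
    simp only [g, dif_pos hy]
    exact (hstep y hy).choose_spec.2
  let s : ℕ → X := fun n => g^[n] x₀
  have hsmem : ∀ n, s n ∈ F := by
    intro n
    induction n with
    | zero => exact hx₀
    | succ n ih =>
      show g^[n+1] x₀ ∈ F
      rw [Function.iterate_succ_apply']
      exact hgmem _ ih
  have hsrel : ∀ n, r (s (n + 1)) (s n) := by
    intro n
    show r (g^[n+1] x₀) (g^[n] x₀)
    rw [Function.iterate_succ_apply']
    exact hgrel _ (hsmem n)
  have hsdesc : ∀ m n, m < n → r (s n) (s m) := by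
    intro m n hmn
    induction n, hmn using Nat.le_induction with
    | base => exact hsrel m
    | succ n _ ih => exact ht (hsrel n) ih
  refine ⟨futureOf r (Set.range s), ?_, ?_⟩
  · refine isIF_of_directed (isFutureSet_futureOf ht hd _) ⟨s 0, s 1, ⟨1, rfl⟩, hsrel 0⟩ ?_
    rintro x ⟨_, ⟨n, rfl⟩, hnx⟩ y ⟨_, ⟨m, rfl⟩, hmy⟩
    refine ⟨s (max n m + 1), ⟨s (max n m + 2), ⟨_, rfl⟩, hsrel _⟩, ?_, ?_⟩
    · exact ht (hsdesc n _ (Nat.lt_succ_of_le (le_max_left n m))) hnx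
    · exact ht (hsdesc m _ (Nat.lt_succ_of_le (le_max_right n m))) hmy
  · rintro z ⟨_, ⟨n, rfl⟩, hz⟩
    exact futclosed hF (hsmem n) hz

lemma decF_empty : decF r (∅ : Set X) = ∅ := by
  ext Q
  simp only [decF, mem_setOf_eq, mem_empty_iff_false, iff_false]
  rintro ⟨hIF, hsub, -⟩
  obtain ⟨x, hx⟩ := hIF.2.1
  exact (hsub hx)

lemma decP_empty : decP r (∅ : Set X) = ∅ := decF_empty (r := flip r)

lemma decF_nonempty (ht : Transitive r) (hd : Dns r)
    (hF : IsFutureSet r F) (hne : F.Nonempty) : (decF r F).Nonempty := by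
  obtain ⟨G, hG, hGF⟩ := exists_isIF_subset ht hd hF hne
  have hub : ∀ C ⊆ {H | IsIF r H ∧ H ⊆ F}, IsChain (· ⊆ ·) C → C.Nonempty →
      ∃ ub ∈ {H | IsIF r H ∧ H ⊆ F}, ∀ s ∈ C, s ⊆ ub := by
    intro C hCsub hchain hCne
    refine ⟨⋃₀ C, ⟨isIF_sUnion_chain ht hd (fun G hG => (hCsub hG).1) hchain hCne, ?_⟩, ?_⟩
    · exact sUnion_subset fun G hG => (hCsub hG).2
    · exact fun s hs => subset_sUnion_of_mem hs
  obtain ⟨m, -, hm⟩ := zorn_subset_nonempty {H | IsIF r H ∧ H ⊆ F} hub G ⟨hG, hGF⟩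
  refine ⟨m, hm.1.1, hm.1.2, ?_⟩
  intro Q' hQ' hQ'F hmQ'
  exact subset_antisymm hmQ' (hm.2 ⟨hQ', hQ'F⟩ hmQ')

lemma eq_empty_of_decF_empty (ht : Transitive r) (hd : Dns r)
    (hF : IsFutureSet r F) (h : decF r F = ∅) : F = ∅ := by
  by_contra hne
  obtain ⟨Q, hQ⟩ := decF_nonempty ht hd hF (nonempty_iff_ne_empty.2 hne)
  rw [h] at hQ
  exact hQ

lemma eq_empty_of_decP_empty (ht : Transitive r) (hd : Dns r)
    (hP : IsPastSet r P) (h : decP r P = ∅) : P = ∅ :=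
  eq_empty_of_decF_empty (transFlip ht) (dnsFlip hd) (isPastSet_flip.1 hP) h


lemma futureChain_lt (ht : Transitive r) (hc : IsFutureChain r c) :
    ∀ {m n : ℕ}, m < n → r (c m) (c n) := by
  intro m n hmn
  induction n, hmn using Nat.le_induction with
  | base => exact hc m
  | succ n _ ih => exact ht ih (hc n)

lemma futPt_antitone (ht : Transitive r) (hc : IsFutureChain r c) {m n : ℕ} (hmn : m ≤ n) :
    futPt r (c n) ⊆ futPt r (c m) := by
  rcases eq_or_lt_of_le hmn with rfl | hlt
  · exact Subset.rfl
  · intro y hy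
    exact ht (futureChain_lt ht hc hlt) hy

lemma seqLS_eq {A : ℕ → Set X} (hA : ∀ m n : ℕ, m ≤ n → A n ⊆ A m) :
    seqLS A = ⋂ n, A n := by
  ext x
  simp only [seqLS, mem_iInter, mem_iUnion]
  constructor
  · intro hx n
    obtain ⟨k, hk, hxk⟩ := hx n
    exact hA n k hk hxk
  · intro hx n
    exact ⟨n, le_refl n, hx n⟩

lemma seqLI_eq {A : ℕ → Set X} (hA : ∀ m n : ℕ, m ≤ n → A n ⊆ A m) :
    seqLI A = ⋂ n, A n := by
  ext x
  simp only [seqLI, mem_iUnion, mem_iInter]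
  constructor
  · rintro ⟨n, hn⟩ k
    by_cases hk : n ≤ k
    · exact hn k hk
    · exact hA k n (le_of_not_ge hk) (hn n (le_refl n))
  · intro hx
    exact ⟨0, fun k _ => hx k⟩

lemma iInter_futPt_subset (ht : Transitive r) (hc : IsFutureChain r c) (hc' : IsFutureChain r c')
    (hpp : pastOf r (Set.range c) ⊆ pastOf r (Set.range c')) :
    (⋂ n, futPt r (c' n)) ⊆ ⋂ n, futPt r (c n) := by
  intro x hx
  simp only [mem_iInter] at hx ⊢
  intro n
  have hcn : c n ∈ pastOf r (Set.range c) := ⟨c (n+1), ⟨n+1, rfl⟩, hc n⟩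
  obtain ⟨_, ⟨k, rfl⟩, hck⟩ := hpp hcn
  exact ht hck (hx k)

lemma Lcheck_const (ht : Transitive r) (hc : IsFutureChain r c) (hc' : IsFutureChain r c')
    (hpp : pastOf r (Set.range c) = pastOf r (Set.range c')) :
    Lcheck r c = Lcheck r c' := by
  have hT : (⋂ n, futPt r (c n)) = ⋂ n, futPt r (c' n) :=
    Subset.antisymm (iInter_futPt_subset ht hc' hc hpp.ge) (iInter_futPt_subset ht hc hc' hpp.le)
  have e1 : seqLI (fun n => futPt r (c n)) = ⋂ n, futPt r (c n) :=
    seqLI_eq (fun m n hmn => futPt_antitone ht hc hmn)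
  have e2 : seqLS (fun n => futPt r (c n)) = ⋂ n, futPt r (c n) :=
    seqLS_eq (fun m n hmn => futPt_antitone ht hc hmn)
  have e1' : seqLI (fun n => futPt r (c' n)) = ⋂ n, futPt r (c' n) :=
    seqLI_eq (fun m n hmn => futPt_antitone ht hc' hmn)
  have e2' : seqLS (fun n => futPt r (c' n)) = ⋂ n, futPt r (c' n) :=
    seqLS_eq (fun m n hmn => futPt_antitone ht hc' hmn)
  unfold Lcheck
  rw [e1, e2, e1', e2', hT]

lemma Lhat_const (ht : Transitive r) (hc : IsPastChain r c) (hc' : IsPastChain r c')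
    (hpp : futureOf r (Set.range c) = futureOf r (Set.range c')) :
    Lhat r c = Lhat r c' :=
  Lcheck_const (r := flip r) (transFlip ht) hc hc' hpp

/-! ### endpoint lemmas -/

variable {p q : Set X × Set X}

lemma not_fut_and_past (ht : Transitive r) (hirr : Irreflexive r)
    (hfc : IsFutureChain r c) (hpc : IsPastChain r c) : False :=
  hirr (c 0) (ht (hfc 0) (hpc 0))

lemma pastOf_range_nonempty (hc : IsFutureChain r c) : (pastOf r (Set.range c)).Nonempty :=
  ⟨c 0, c 1, ⟨1, rfl⟩, hc 0⟩

lemma futureOf_range_nonempty (hc : IsPastChain r c) : (futureOf r (Set.range c)).Nonempty :=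
  ⟨c 0, c 1, ⟨1, rfl⟩, hc 0⟩

lemma isPastSet_pastOf (ht : Transitive r) (hd : Dns r) (S : Set X) :
    IsPastSet r (pastOf r S) :=
  isFutureSet_futureOf (transFlip ht) (dnsFlip hd) S

lemma endpoint_elim_fut (ht : Transitive r) (hirr : Irreflexive r)
    (hc : IsFutureChain r c) (h : IsEndpoint r c p) :
    p.1 = pastOf r (Set.range c) ∧ decF r p.2 ⊆ Lcheck r c := by
  rcases h.2.2 with ⟨-, h1, h2⟩ | ⟨hpc, -, -⟩
  · exact ⟨h1, h2⟩
  · exact absurd (not_fut_and_past ht hirr hc hpc) not_false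

lemma endpoint_elim_past (ht : Transitive r) (hirr : Irreflexive r)
    (hc : IsPastChain r c) (h : IsEndpoint r c p) :
    p.2 = futureOf r (Set.range c) ∧ decP r p.1 ⊆ Lhat r c := by
  rcases h.2.2 with ⟨hfc, -, -⟩ | ⟨-, h1, h2⟩
  · exact absurd (not_fut_and_past ht hirr hfc hc) not_false
  · exact ⟨h1, h2⟩

lemma endpoint_mk_fut (hP : IsPastSet r p.1) (hF : IsFutureSet r p.2)
    (hc : IsFutureChain r c) (he : p.1 = pastOf r (Set.range c))
    (hdec : decF r p.2 ⊆ Lcheck r c) : IsEndpoint r c p :=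
  ⟨hP, hF, Or.inl ⟨hc, he, hdec⟩⟩

lemma endpoint_mk_past (hP : IsPastSet r p.1) (hF : IsFutureSet r p.2)
    (hc : IsPastChain r c) (he : p.2 = futureOf r (Set.range c))
    (hdec : decP r p.1 ⊆ Lhat r c) : IsEndpoint r c p :=
  ⟨hP, hF, Or.inr ⟨hc, he, hdec⟩⟩

/-! ### the construction -/

variable (r)

/-- future chains with no endpoint in `i[X]` -/
def FCh (c : ℕ → X) : Prop := IsFutureChain r c ∧ ¬ ∃ x : X, IsEndpoint r c (inj r x)

/-- past chains with no endpoint in `i[X]` -/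
def PCh (c : ℕ → X) : Prop := IsPastChain r c ∧ ¬ ∃ x : X, IsEndpoint r c (inj r x)

/-- pasts of future chains needing coverage -/
def PP : Set (Set X) := {P | ∃ c, FCh r c ∧ pastOf r (Set.range c) = P}

/-- futures of past chains needing coverage -/
def FF : Set (Set X) := {F | ∃ c, PCh r c ∧ futureOf r (Set.range c) = F}

/-- a compatible pair -/
def Pairing (P F : Set X) : Prop :=
  IsPastSet r P ∧ IsFutureSet r F ∧
    (∃ c, IsFutureChain r c ∧ pastOf r (Set.range c) = P ∧ decF r F ⊆ Lcheck r c) ∧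
    (∃ c, IsPastChain r c ∧ futureOf r (Set.range c) = F ∧ decP r P ⊆ Lhat r c)

def Edges : Set (Set X × Set X) := {e | e.1 ∈ PP r ∧ e.2 ∈ FF r ∧ Pairing r e.1 e.2}

def IsMatching (M : Set (Set X × Set X)) : Prop :=
  M ⊆ Edges r ∧ ∀ e₁ ∈ M, ∀ e₂ ∈ M, e₁ ≠ e₂ → e₁.1 ≠ e₂.1 ∧ e₁.2 ≠ e₂.2

variable {r}

lemma PP_pastSet (ht : Transitive r) (hd : Dns r) {P : Set X} (hP : P ∈ PP r) :
    IsPastSet r P := by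
  obtain ⟨c, -, rfl⟩ := hP
  exact isPastSet_pastOf ht hd _

lemma FF_futSet (ht : Transitive r) (hd : Dns r) {F : Set X} (hF : F ∈ FF r) :
    IsFutureSet r F := by
  obtain ⟨c, hc, rfl⟩ := hF
  exact isFutureSet_futureOf ht hd _

lemma PP_nonempty {P : Set X} (hP : P ∈ PP r) : P.Nonempty := by
  obtain ⟨c, hc, rfl⟩ := hP
  exact pastOf_range_nonempty hc.1

lemma FF_nonempty {F : Set X} (hF : F ∈ FF r) : F.Nonempty := by
  obtain ⟨c, hc, rfl⟩ := hF
  exact futureOf_range_nonempty hc.1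

/-- a pair-typed point is an endpoint of every future chain whose past is its first
component -/
lemma pairing_endpoint_fut (ht : Transitive r) {P F : Set X} (hpair : Pairing r P F)
    (hc : IsFutureChain r c) (hpc : pastOf r (Set.range c) = P) :
    IsEndpoint r c (P, F) := by
  obtain ⟨hPs, hFs, ⟨c₁, hc₁, hpc₁, hdec₁⟩, -⟩ := hpair
  refine endpoint_mk_fut hPs hFs hc hpc.symm ?_
  rwa [Lcheck_const ht hc₁ hc (by rw [hpc₁, hpc])] at hdec₁

lemma pairing_endpoint_past (ht : Transitive r) {P F : Set X} (hpair : Pairing r P F)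
    (hc : IsPastChain r c) (hfc : futureOf r (Set.range c) = F) :
    IsEndpoint r c (P, F) := by
  obtain ⟨hPs, hFs, -, ⟨c₀, hc₀, hfc₀, hdec₀⟩⟩ := hpair
  refine endpoint_mk_past hPs hFs hc hfc.symm ?_
  rwa [Lhat_const ht hc₀ hc (by rw [hfc₀, hfc])] at hdec₀

lemma empty_endpoint_fut {P : Set X} (hPs : IsPastSet r P)
    (hc : IsFutureChain r c) (hpc : pastOf r (Set.range c) = P) :
    IsEndpoint r c (P, (∅ : Set X)) :=
  endpoint_mk_fut hPs isFutureSet_empty hc hpc.symm (by rw [show ((P, (∅:Set X)).2) = (∅:Set X) from rfl, decF_empty]; exact empty_subset _)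

lemma empty_endpoint_past {F : Set X} (hFs : IsFutureSet r F)
    (hc : IsPastChain r c) (hfc : futureOf r (Set.range c) = F) :
    IsEndpoint r c ((∅ : Set X), F) :=
  endpoint_mk_past isPastSet_empty hFs hc hfc.symm (by rw [show (((∅:Set X), F).1) = (∅:Set X) from rfl, decP_empty]; exact empty_subset _)

/-- a maximal matching exists -/
lemma exists_maximal_matching :
    ∃ M, IsMatching r M ∧ ∀ M', IsMatching r M' → M ⊆ M' → M' = M := by
  have hub : ∀ C ⊆ {M | IsMatching r M}, IsChain (· ⊆ ·) C →
      ∃ ub ∈ {M | IsMatching r M}, ∀ s ∈ C, s ⊆ ub := by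
    intro C hCsub hchain
    refine ⟨⋃₀ C, ⟨?_, ?_⟩, fun s hs => subset_sUnion_of_mem hs⟩
    · exact sUnion_subset fun M hM => (hCsub hM).1
    · rintro e₁ ⟨M₁, hM₁, he₁⟩ e₂ ⟨M₂, hM₂, he₂⟩ hne
      rcases hchain.total hM₁ hM₂ with hle | hle
      · exact (hCsub hM₂).2 e₁ (hle he₁) e₂ he₂ hne
      · exact (hCsub hM₁).2 e₁ he₁ e₂ (hle he₂) hne
  obtain ⟨M, hM⟩ := zorn_subset {M | IsMatching r M} hub
  exact ⟨M, hM.1, fun M' hM' hMM' => subset_antisymm (hM.2 hM' hMM') hMM'⟩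

/-- The key construction: a "rigid" boundary set. -/
theorem exists_B (ht : Transitive r) (hirr : Irreflexive r) (hd : Dns r) :
    ∃ B : Set (Set X × Set X),
      (∀ b ∈ B, Pairing r b.1 b.2 ∨
        (b.2 = ∅ ∧ b.1 ∈ PP r ∧ ∀ F, ¬ Pairing r b.1 F) ∨
        (b.1 = ∅ ∧ b.2 ∈ FF r ∧ ∀ P, ¬ Pairing r P b.2)) ∧
      (∀ c, FCh r c → ∃ b ∈ B, IsEndpoint r c b) ∧
      (∀ c, PCh r c → ∃ b ∈ B, IsEndpoint r c b) ∧
      (∀ b ∈ B, ∃ c, IsChronChain r c ∧ (¬ ∃ x, IsEndpoint r c (inj r x)) ∧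
        IsEndpoint r c b ∧ ∀ b' ∈ B, IsEndpoint r c b' → b' = b) := by
  classical
  obtain ⟨M, ⟨hMsub, hMinj⟩, hMmax⟩ := exists_maximal_matching (r := r)
  set mP : Set X → Prop := fun P => ∃ F, (P, F) ∈ M with hmP
  set mF : Set X → Prop := fun F => ∃ P, (P, F) ∈ M with hmF
  set bp : Set X → Set X × Set X :=
    fun P => if h : ∃ F, Pairing r P F then (P, h.choose) else (P, ∅) with hbp
  set fq : Set X → Set X × Set X :=
    fun F => if h : ∃ P, Pairing r P F then (h.choose, F) else (∅, F) with hfq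
  have hbp1 : ∀ P, (bp P).1 = P := by
    intro P
    by_cases h : ∃ F, Pairing r P F <;> simp [hbp, h]
  have hfq2 : ∀ F, (fq F).2 = F := by
    intro F
    by_cases h : ∃ P, Pairing r P F <;> simp [hfq, h]
  have hbp_cases : ∀ P, Pairing r P (bp P).2 ∨ ((bp P).2 = ∅ ∧ ∀ F, ¬ Pairing r P F) := by
    intro P
    by_cases h : ∃ F, Pairing r P F
    · left; simpa [hbp, h] using h.choose_spec
    · right
      constructor
      · simp [hbp, h]
      · exact fun F hF => h ⟨F, hF⟩
  have hfq_cases : ∀ F, Pairing r (fq F).1 F ∨ ((fq F).1 = ∅ ∧ ∀ P, ¬ Pairing r P F) := by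
    intro F
    by_cases h : ∃ P, Pairing r P F
    · left; simpa [hfq, h] using h.choose_spec
    · right
      constructor
      · simp [hfq, h]
      · exact fun P hP => h ⟨P, hP⟩
  -- maximality of the matching: no compatible fully-unmatched pair exists
  have hext : ∀ P F, P ∈ PP r → F ∈ FF r → Pairing r P F → ¬ mP P → ¬ mF F → False := by
    intro P F hPP hFF hpair hnP hnF
    have hM' : IsMatching r (insert (P, F) M) := by
      constructor
      · intro e he
        rcases he with rfl | he
        · exact ⟨hPP, hFF, hpair⟩
        · exact hMsub he
      · intro e₁ he₁ e₂ he₂ hne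
        rcases he₁ with rfl | he₁ <;> rcases he₂ with rfl | he₂
        · exact absurd rfl hne
        · constructor
          · intro h1
            exact hnP ⟨e₂.2, by rw [show P = e₂.1 from h1, Prod.mk.eta]; exact he₂⟩
          · intro h2
            exact hnF ⟨e₂.1, by rw [show F = e₂.2 from h2, Prod.mk.eta]; exact he₂⟩
        · constructor
          · intro h1
            exact hnP ⟨e₁.2, by rw [show P = e₁.1 from h1.symm, Prod.mk.eta]; exact he₁⟩
          · intro h2
            exact hnF ⟨e₁.1, by rw [show F = e₁.2 from h2.symm, Prod.mk.eta]; exact he₁⟩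
        · exact hMinj e₁ he₁ e₂ he₂ hne
    have := hMmax _ hM' (subset_insert _ _)
    exact hnP ⟨F, this ▸ mem_insert _ _⟩
  set clashP : Set X × Set X → Prop :=
    fun e => ∃ F, F ∈ FF r ∧ ¬ mF F ∧ (fq F).1 = e.1 with hclashP
  set clashF : Set X × Set X → Prop :=
    fun e => ∃ P, P ∈ PP r ∧ ¬ mP P ∧ (bp P).2 = e.2 with hclashF
  set B : Set (Set X × Set X) :=
    {b | (b ∈ M ∧ ¬ (clashP b ∧ clashF b)) ∨
      (∃ P, (P ∈ PP r ∧ ¬ mP P) ∧ bp P = b) ∨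
      (∃ F, (F ∈ FF r ∧ ¬ mF F) ∧ fq F = b)} with hB
  have hBmem : ∀ b, b ∈ B ↔
      (b ∈ M ∧ ¬ (clashP b ∧ clashF b)) ∨
      (∃ P, (P ∈ PP r ∧ ¬ mP P) ∧ bp P = b) ∨
      (∃ F, (F ∈ FF r ∧ ¬ mF F) ∧ fq F = b) := fun b => Iff.rfl
  refine ⟨B, ?_, ?_, ?_, ?_⟩
  · -- typing
    intro b hb
    rcases (hBmem b).1 hb with ⟨hbM, -⟩ | ⟨P, ⟨hPPP, -⟩, rfl⟩ | ⟨F, ⟨hFFF, -⟩, rfl⟩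
    · exact Or.inl (hMsub hbM).2.2
    · rcases hbp_cases P with hpair | ⟨h2, hno⟩
      · exact Or.inl (by rw [hbp1]; exact hpair)
      · exact Or.inr (Or.inl ⟨h2, by rw [hbp1]; exact hPPP, by rw [hbp1]; exact hno⟩)
    · rcases hfq_cases F with hpair | ⟨h1, hno⟩
      · exact Or.inl (by rw [hfq2]; exact hpair)
      · exact Or.inr (Or.inr ⟨h1, by rw [hfq2]; exact hFFF, by rw [hfq2]; exact hno⟩)
  · -- coverage of future chains
    intro c hc
    have hPPP : pastOf r (Set.range c) ∈ PP r := ⟨c, hc, rfl⟩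
    set P := pastOf r (Set.range c) with hPdef
    by_cases hm : mP P
    · obtain ⟨F₀, hF₀⟩ := hm
      by_cases hk : ¬ (clashP (P, F₀) ∧ clashF (P, F₀))
      · refine ⟨(P, F₀), (hBmem _).2 (Or.inl ⟨hF₀, hk⟩), ?_⟩
        exact pairing_endpoint_fut ht (hMsub hF₀).2.2 hc.1 rfl
      · rw [not_not] at hk
        obtain ⟨F', hF'FF, hF'nm, hfq1⟩ := hk.1
        refine ⟨fq F', (hBmem _).2 (Or.inr (Or.inr ⟨F', ⟨hF'FF, hF'nm⟩, rfl⟩)), ?_⟩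
        have hfq1' : (fq F').1 = P := hfq1
        rcases hfq_cases F' with hpair | ⟨h1, -⟩
        · have : IsEndpoint r c ((fq F').1, (fq F').2) := by
            rw [hfq2, hfq1']
            rw [hfq1'] at hpair
            exact pairing_endpoint_fut ht hpair hc.1 rfl
          rwa [Prod.mk.eta] at this
        · exfalso
          obtain ⟨x, hx⟩ := PP_nonempty hPPP
          rw [← hfq1', h1] at hx
          exact hx
    · refine ⟨bp P, (hBmem _).2 (Or.inr (Or.inl ⟨P, ⟨hPPP, hm⟩, rfl⟩)), ?_⟩
      rcases hbp_cases P with hpair | ⟨h2, -⟩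
      · have : IsEndpoint r c ((bp P).1, (bp P).2) := by
          rw [hbp1]
          exact pairing_endpoint_fut ht hpair hc.1 rfl
        rwa [Prod.mk.eta] at this
      · have : IsEndpoint r c ((bp P).1, (bp P).2) := by
          rw [hbp1, h2]
          exact empty_endpoint_fut (PP_pastSet ht hd hPPP) hc.1 rfl
        rwa [Prod.mk.eta] at this
  · -- coverage of past chains
    intro c hc
    have hFFF : futureOf r (Set.range c) ∈ FF r := ⟨c, hc, rfl⟩
    set F := futureOf r (Set.range c) with hFdef
    by_cases hm : mF F
    · obtain ⟨P₀, hP₀⟩ := hm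
      by_cases hk : ¬ (clashP (P₀, F) ∧ clashF (P₀, F))
      · refine ⟨(P₀, F), (hBmem _).2 (Or.inl ⟨hP₀, hk⟩), ?_⟩
        exact pairing_endpoint_past ht (hMsub hP₀).2.2 hc.1 rfl
      · rw [not_not] at hk
        obtain ⟨P', hP'PP, hP'nm, hbp2⟩ := hk.2
        refine ⟨bp P', (hBmem _).2 (Or.inr (Or.inl ⟨P', ⟨hP'PP, hP'nm⟩, rfl⟩)), ?_⟩
        have hbp2' : (bp P').2 = F := hbp2
        rcases hbp_cases P' with hpair | ⟨h2, -⟩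
        · have : IsEndpoint r c ((bp P').1, (bp P').2) := by
            rw [hbp1, hbp2']
            rw [hbp2'] at hpair
            exact pairing_endpoint_past ht hpair hc.1 rfl
          rwa [Prod.mk.eta] at this
        · exfalso
          obtain ⟨x, hx⟩ := FF_nonempty hFFF
          rw [← hbp2', h2] at hx
          exact hx
    · refine ⟨fq F, (hBmem _).2 (Or.inr (Or.inr ⟨F, ⟨hFFF, hm⟩, rfl⟩)), ?_⟩
      rcases hfq_cases F with hpair | ⟨h1, -⟩
      · have : IsEndpoint r c ((fq F).1, (fq F).2) := by
          rw [hfq2]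
          exact pairing_endpoint_past ht hpair hc.1 rfl
        rwa [Prod.mk.eta] at this
      · have : IsEndpoint r c ((fq F).1, (fq F).2) := by
          rw [hfq2, h1]
          exact empty_endpoint_past (FF_futSet ht hd hFFF) hc.1 rfl
        rwa [Prod.mk.eta] at this
  · -- privacy
    intro b hb
    rcases (hBmem b).1 hb with ⟨hbM, hkeep⟩ | ⟨P, ⟨hPPP, hPnm⟩, rfl⟩ | ⟨F, ⟨hFFF, hFnm⟩, rfl⟩
    · -- a kept matched edge
      rcases not_and_or.mp hkeep with hnc | hnc
      · -- no clash on the P side: use a future chain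
        obtain ⟨c, hcF, hpc⟩ := (hMsub hbM).1
        refine ⟨c, Or.inl hcF.1, hcF.2, ?_, ?_⟩
        · have : IsEndpoint r c (b.1, b.2) :=
            pairing_endpoint_fut ht (hMsub hbM).2.2 hcF.1 hpc
          rwa [Prod.mk.eta] at this
        · intro b' hb' hend
          have hb'1 : b'.1 = b.1 := by
            rw [(endpoint_elim_fut ht hirr hcF.1 hend).1, hpc]
          rcases (hBmem b').1 hb' with ⟨hb'M, -⟩ | ⟨P', ⟨hP'PP, hP'nm⟩, rfl⟩ | ⟨F', ⟨hF'FF, hF'nm⟩, rfl⟩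
          · by_contra hne
            exact (hMinj b' hb'M b hbM hne).1 hb'1
          · exfalso
            apply hP'nm
            rw [hbp1] at hb'1
            exact ⟨b.2, by rw [hb'1, Prod.mk.eta]; exact hbM⟩
          · exact absurd ⟨F', hF'FF, hF'nm, hb'1⟩ hnc
      · -- no clash on the F side: use a past chain
        obtain ⟨c, hcP, hfc⟩ := (hMsub hbM).2.1
        refine ⟨c, Or.inr hcP.1, hcP.2, ?_, ?_⟩
        · have : IsEndpoint r c (b.1, b.2) :=
            pairing_endpoint_past ht (hMsub hbM).2.2 hcP.1 hfc
          rwa [Prod.mk.eta] at this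
        · intro b' hb' hend
          have hb'2 : b'.2 = b.2 := by
            rw [(endpoint_elim_past ht hirr hcP.1 hend).1, hfc]
          rcases (hBmem b').1 hb' with ⟨hb'M, -⟩ | ⟨P', ⟨hP'PP, hP'nm⟩, rfl⟩ | ⟨F', ⟨hF'FF, hF'nm⟩, rfl⟩
          · by_contra hne
            exact (hMinj b' hb'M b hbM hne).2 hb'2
          · exact absurd ⟨P', hP'PP, hP'nm, hb'2⟩ hnc
          · exfalso
            apply hF'nm
            rw [hfq2] at hb'2
            exact ⟨b.1, by rw [hb'2, Prod.mk.eta]; exact hbM⟩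
    · -- a `bp` point
      obtain ⟨c, hcF, hpc⟩ := hPPP
      refine ⟨c, Or.inl hcF.1, hcF.2, ?_, ?_⟩
      · rcases hbp_cases P with hpair | ⟨h2, -⟩
        · have : IsEndpoint r c ((bp P).1, (bp P).2) := by
            rw [hbp1]
            exact pairing_endpoint_fut ht hpair hcF.1 hpc
          rwa [Prod.mk.eta] at this
        · have : IsEndpoint r c ((bp P).1, (bp P).2) := by
            rw [hbp1, h2]
            exact empty_endpoint_fut (PP_pastSet ht hd ⟨c, hcF, hpc⟩) hcF.1 hpc
          rwa [Prod.mk.eta] at this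
      · intro b' hb' hend
        have hb'1 : b'.1 = P := by
          rw [(endpoint_elim_fut ht hirr hcF.1 hend).1, hpc]
        rcases (hBmem b').1 hb' with ⟨hb'M, -⟩ | ⟨P', ⟨hP'PP, hP'nm⟩, rfl⟩ | ⟨F', ⟨hF'FF, hF'nm⟩, rfl⟩
        · exfalso
          apply hPnm
          exact ⟨b'.2, by rw [← hb'1, Prod.mk.eta]; exact hb'M⟩
        · rw [hbp1] at hb'1
          rw [hb'1]
        · exfalso
          rcases hfq_cases F' with hpair | ⟨h1, -⟩
          · rw [hb'1] at hpair
            exact hext P F' ⟨c, hcF, hpc⟩ hF'FF hpair hPnm hF'nm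
          · obtain ⟨x, hx⟩ := PP_nonempty (⟨c, hcF, hpc⟩ : P ∈ PP r)
            rw [← hb'1, h1] at hx
            exact hx
    · -- a `fq` point
      obtain ⟨c, hcP, hfc⟩ := hFFF
      refine ⟨c, Or.inr hcP.1, hcP.2, ?_, ?_⟩
      · rcases hfq_cases F with hpair | ⟨h1, -⟩
        · have : IsEndpoint r c ((fq F).1, (fq F).2) := by
            rw [hfq2]
            exact pairing_endpoint_past ht hpair hcP.1 hfc
          rwa [Prod.mk.eta] at this
        · have : IsEndpoint r c ((fq F).1, (fq F).2) := by
            rw [hfq2, h1]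
            exact empty_endpoint_past (FF_futSet ht hd ⟨c, hcP, hfc⟩) hcP.1 hfc
          rwa [Prod.mk.eta] at this
      · intro b' hb' hend
        have hb'2 : b'.2 = F := by
          rw [(endpoint_elim_past ht hirr hcP.1 hend).1, hfc]
        rcases (hBmem b').1 hb' with ⟨hb'M, -⟩ | ⟨P', ⟨hP'PP, hP'nm⟩, rfl⟩ | ⟨F', ⟨hF'FF, hF'nm⟩, rfl⟩
        · exfalso
          apply hFnm
          exact ⟨b'.1, by rw [← hb'2, Prod.mk.eta]; exact hb'M⟩
        · exfalso
          rcases hbp_cases P' with hpair | ⟨h2, -⟩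
          · rw [hb'2] at hpair
            exact hext P' F hP'PP ⟨c, hcP, hfc⟩ hpair hP'nm hFnm
          · obtain ⟨x, hx⟩ := FF_nonempty (⟨c, hcP, hfc⟩ : F ∈ FF r)
            rw [← hb'2, h2] at hx
            exact hx
        · rw [hfq2] at hb'2
          rw [hb'2]

end Stmt18Aux


/-- Thm. 7.2: for a weakly distinguishing chronological set `X`,
the partially ordered set `(C_X*, ≤)` has a minimal element. -/
theorem stmt18 {X : Type*} (r : X → X → Prop) (h : IsChronSet r) (hw : WeaklyDist r) :
    ∃ Xb : Set (Set X × Set X), InCstar r Xb ∧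
      ∀ Xb' : Set (Set X × Set X), InCstar r Xb' → CompLE r Xb' Xb → Xb' = Xb := by
  classical
  obtain ⟨ht, hirr, -, D, -, hdenseD⟩ := h
  have hd : Stmt18Aux.Dns r := by
    intro x y hxy
    obtain ⟨d, -, h1, h2⟩ := hdenseD x y hxy
    exact ⟨d, h1, h2⟩
  obtain ⟨B, hBtype, hBcovF, hBcovP, hBpriv⟩ := Stmt18Aux.exists_B (r := r) ht hirr hd
  set Xb : Set (Set X × Set X) := Set.range (inj r) ∪ B with hXbdef
  have hBninj : ∀ b ∈ B, b ∉ Set.range (inj r) := by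
    rintro b hb ⟨x, hx⟩
    obtain ⟨c, -, hnoinj, hend, -⟩ := hBpriv b hb
    exact hnoinj ⟨x, hx ▸ hend⟩
  have hbdryXb : bdry r Xb = B := by
    apply Set.Subset.antisymm
    · rintro b ⟨hb, hbn⟩
      rcases hb with hb | hb
      · exact absurd hb hbn
      · exact hb
    · intro b hb
      exact ⟨Or.inr hb, hBninj b hb⟩
  have hXbcomp : IsCompletion r Xb := by
    refine ⟨Set.subset_union_left, ?_, ?_⟩
    · rintro b (hb | hb)
      · exact Or.inl hb
      · obtain ⟨c, hcc, -, hend, -⟩ := hBpriv b hb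
        exact Or.inr ⟨c, hcc, hend⟩
    · intro c hcc
      by_cases hx : ∃ x, IsEndpoint r c (inj r x)
      · obtain ⟨x, hx⟩ := hx
        exact ⟨inj r x, Or.inl ⟨x, rfl⟩, hx⟩
      · rcases hcc with hfc | hpc
        · obtain ⟨b, hb, hend⟩ := hBcovF c ⟨hfc, hx⟩
          exact ⟨b, Or.inr hb, hend⟩
        · obtain ⟨b, hb, hend⟩ := hBcovP c ⟨hpc, hx⟩
          exact ⟨b, Or.inr hb, hend⟩
  have hXbstar : InCstar r Xb := by
    refine ⟨hXbcomp, ?_⟩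
    rintro p ⟨hpX, hpn⟩ hcomp
    have hpB : p ∈ B := by
      rcases hpX with hp | hp
      · exact absurd hp hpn
      · exact hp
    obtain ⟨c, hcc, hnoinj, hend, huniq⟩ := hBpriv p hpB
    obtain ⟨q, hq, hqend⟩ := hcomp.2.2 c hcc
    rcases hq with ⟨hqX, hqne⟩
    rcases hqX with hqi | hqB
    · obtain ⟨x, hx⟩ := hqi
      exact hnoinj ⟨x, hx ▸ hqend⟩
    · exact hqne (huniq q hqB hqend)
  refine ⟨Xb, hXbstar, ?_⟩
  intro Xb' hXb' hle
  obtain ⟨S, hS1, hS2, hS3, hS4⟩ := hle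
  -- rigidity: every point of B can only be identified with itself
  have hrig : ∀ q ∈ B, ∀ p ∈ bdry r Xb', q ∈ S p → p = q := by
    intro q hqB p hp hqSp
    have hpend : ∃ c, IsChronChain r c ∧ IsEndpoint r c p := by
      have hpX : p ∈ endSet r := hXb'.1.2.1 hp.1
      rcases hpX with hpi | hpe
      · exact absurd hpi hp.2
      · exact hpe
    obtain ⟨c'', -, hc''e⟩ := hpend
    have hpPast : IsPastSet r p.1 := hc''e.1
    have hpFut : IsFutureSet r p.2 := hc''e.2.1
    rcases hBtype q hqB with hpair | ⟨hq2, hq1PP, hnoF⟩ | ⟨hq1, hq2FF, hnoP⟩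
    · -- CASE A : a paired point
      obtain ⟨hqP, hqF, ⟨c₁, hc₁, hpc₁, hdec₁⟩, ⟨c₀, hc₀, hfc₀, hdec₀⟩⟩ := hpair
      have hq1e : IsEndpoint r c₁ q := Stmt18Aux.endpoint_mk_fut hqP hqF hc₁ hpc₁.symm hdec₁
      have hp1e := hS3 p hp c₁ (Or.inl hc₁) ⟨q, hqSp, hq1e⟩
      have e1 : p.1 = q.1 := by
        rw [(Stmt18Aux.endpoint_elim_fut ht hirr hc₁ hp1e).1, hpc₁]
      have hq0e : IsEndpoint r c₀ q := Stmt18Aux.endpoint_mk_past hqP hqF hc₀ hfc₀.symm hdec₀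
      have hp0e := hS3 p hp c₀ (Or.inr hc₀) ⟨q, hqSp, hq0e⟩
      have e2 : p.2 = q.2 := by
        rw [(Stmt18Aux.endpoint_elim_past ht hirr hc₀ hp0e).1, hfc₀]
      exact Prod.ext e1 e2
    · -- CASE B : q = (q.1, ∅)
      have hqP : IsPastSet r q.1 := Stmt18Aux.PP_pastSet ht hd hq1PP
      have hq1PP' := hq1PP
      obtain ⟨cq, hcqF, hcqpc⟩ := hq1PP'
      have hqF : IsFutureSet r q.2 := by rw [hq2]; exact Stmt18Aux.isFutureSet_empty
      have hq_end : ∀ c, IsFutureChain r c → pastOf r (Set.range c) = q.1 → IsEndpoint r c q := by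
        intro c hc hpc
        refine Stmt18Aux.endpoint_mk_fut hqP hqF hc hpc.symm ?_
        rw [hq2, Stmt18Aux.decF_empty]
        exact Set.empty_subset _
      have hp_end : ∀ c, IsFutureChain r c → pastOf r (Set.range c) = q.1 → IsEndpoint r c p :=
        fun c hc hpc => hS3 p hp c (Or.inl hc) ⟨q, hqSp, hq_end c hc hpc⟩
      have hp1 : p.1 = q.1 := by
        rw [(Stmt18Aux.endpoint_elim_fut ht hirr hcqF.1 (hp_end cq hcqF.1 hcqpc)).1, hcqpc]
      have hpdecF : decF r p.2 ⊆ Lcheck r cq :=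
        (Stmt18Aux.endpoint_elim_fut ht hirr hcqF.1 (hp_end cq hcqF.1 hcqpc)).2
      have hnopast : ∀ c, IsPastChain r c → ¬ IsEndpoint r c p := by
        intro c hc hend
        obtain ⟨e1, e2⟩ := Stmt18Aux.endpoint_elim_past ht hirr hc hend
        refine hnoF p.2 ⟨hqP, hpFut, ⟨cq, hcqF.1, hcqpc, hpdecF⟩, ⟨c, hc, e1.symm, ?_⟩⟩
        rw [← hp1]
        exact e2
      have hunique : ∀ q' ∈ S p, q' = q := by
        intro q' hq'
        have hq'B : q' ∈ B := by
          have := hS1 p hp hq'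
          rwa [hbdryXb] at this
        rcases hBtype q' hq'B with hpair' | ⟨hq'2, hq'1PP, -⟩ | ⟨hq'1, hq'2FF, -⟩
        · exfalso
          obtain ⟨hq'P, hq'F, -, ⟨c₀, hc₀, hfc₀, hdec₀⟩⟩ := hpair'
          have hq'e : IsEndpoint r c₀ q' :=
            Stmt18Aux.endpoint_mk_past hq'P hq'F hc₀ hfc₀.symm hdec₀
          exact hnopast c₀ hc₀ (hS3 p hp c₀ (Or.inr hc₀) ⟨q', hq', hq'e⟩)
        · have hq'P : IsPastSet r q'.1 := Stmt18Aux.PP_pastSet ht hd hq'1PP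
          obtain ⟨c₂, hc₂F, hc₂pc⟩ := hq'1PP
          have hq'F : IsFutureSet r q'.2 := by rw [hq'2]; exact Stmt18Aux.isFutureSet_empty
          have hq'e : IsEndpoint r c₂ q' :=
            Stmt18Aux.endpoint_mk_fut hq'P hq'F hc₂F.1 hc₂pc.symm
              (by rw [hq'2, Stmt18Aux.decF_empty]; exact Set.empty_subset _)
          have hpe := hS3 p hp c₂ (Or.inl hc₂F.1) ⟨q', hq', hq'e⟩
          have e1 : p.1 = q'.1 := by
            rw [(Stmt18Aux.endpoint_elim_fut ht hirr hc₂F.1 hpe).1, hc₂pc]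
          exact Prod.ext (e1.symm.trans hp1) (hq'2.trans hq2.symm)
        · exfalso
          have hq'F : IsFutureSet r q'.2 := Stmt18Aux.FF_futSet ht hd hq'2FF
          obtain ⟨c₂, hc₂P, hc₂fc⟩ := hq'2FF
          have hq'P : IsPastSet r q'.1 := by rw [hq'1]; exact Stmt18Aux.isPastSet_empty
          have hq'e : IsEndpoint r c₂ q' :=
            Stmt18Aux.endpoint_mk_past hq'P hq'F hc₂P.1 hc₂fc.symm
              (by rw [hq'1, Stmt18Aux.decP_empty]; exact Set.empty_subset _)
          exact hnopast c₂ hc₂P.1 (hS3 p hp c₂ (Or.inr hc₂P.1) ⟨q', hq', hq'e⟩)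
      have hsingle : S p = {q} := Set.eq_singleton_iff_unique_mem.2 ⟨hqSp, hunique⟩
      have hsame : ∀ c, IsChronChain r c → (IsEndpoint r c q ↔ IsEndpoint r c p) := by
        intro c hcc
        rcases hcc with hfc | hpc
        · constructor
          · intro hqe
            exact hS3 p hp c (Or.inl hfc) ⟨q, hqSp, hqe⟩
          · intro hpe
            have e1 := (Stmt18Aux.endpoint_elim_fut ht hirr hfc hpe).1
            exact hq_end c hfc (by rw [← e1]; exact hp1)
        · constructor
          · intro hqe
            exfalso
            have e1 := (Stmt18Aux.endpoint_elim_past ht hirr hpc hqe).1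
            obtain ⟨x, hx⟩ := Stmt18Aux.futureOf_range_nonempty hpc
            rw [← e1, hq2] at hx
            exact hx
          · intro hpe
            exact absurd hpe (hnopast c hpc)
      obtain ⟨-, hdF⟩ := hS4 p hp q hsingle hsame
      rw [hq2, Stmt18Aux.decF_empty] at hdF
      have hp2 : p.2 = ∅ :=
        Stmt18Aux.eq_empty_of_decF_empty ht hd hpFut (Set.subset_empty_iff.1 hdF)
      exact Prod.ext hp1 (by rw [hp2, hq2])
    · -- CASE C : q = (∅, q.2)
      have hqF : IsFutureSet r q.2 := Stmt18Aux.FF_futSet ht hd hq2FF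
      have hq2FF' := hq2FF
      obtain ⟨cq, hcqP, hcqfc⟩ := hq2FF'
      have hqP : IsPastSet r q.1 := by rw [hq1]; exact Stmt18Aux.isPastSet_empty
      have hq_end : ∀ c, IsPastChain r c → futureOf r (Set.range c) = q.2 → IsEndpoint r c q := by
        intro c hc hfc
        refine Stmt18Aux.endpoint_mk_past hqP hqF hc hfc.symm ?_
        rw [hq1, Stmt18Aux.decP_empty]
        exact Set.empty_subset _
      have hp_end : ∀ c, IsPastChain r c → futureOf r (Set.range c) = q.2 → IsEndpoint r c p :=
        fun c hc hfc => hS3 p hp c (Or.inr hc) ⟨q, hqSp, hq_end c hc hfc⟩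
      have hp2 : p.2 = q.2 := by
        rw [(Stmt18Aux.endpoint_elim_past ht hirr hcqP.1 (hp_end cq hcqP.1 hcqfc)).1, hcqfc]
      have hpdecP : decP r p.1 ⊆ Lhat r cq :=
        (Stmt18Aux.endpoint_elim_past ht hirr hcqP.1 (hp_end cq hcqP.1 hcqfc)).2
      have hnofut : ∀ c, IsFutureChain r c → ¬ IsEndpoint r c p := by
        intro c hc hend
        obtain ⟨e1, e2⟩ := Stmt18Aux.endpoint_elim_fut ht hirr hc hend
        refine hnoP p.1 ⟨hpPast, hqF, ⟨c, hc, e1.symm, ?_⟩, ⟨cq, hcqP.1, hcqfc, hpdecP⟩⟩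
        rw [← hp2]
        exact e2
      have hunique : ∀ q' ∈ S p, q' = q := by
        intro q' hq'
        have hq'B : q' ∈ B := by
          have := hS1 p hp hq'
          rwa [hbdryXb] at this
        rcases hBtype q' hq'B with hpair' | ⟨hq'2, hq'1PP, -⟩ | ⟨hq'1, hq'2FF, -⟩
        · exfalso
          obtain ⟨hq'P, hq'F, ⟨c₁, hc₁, hpc₁, hdec₁⟩, -⟩ := hpair'
          have hq'e : IsEndpoint r c₁ q' :=
            Stmt18Aux.endpoint_mk_fut hq'P hq'F hc₁ hpc₁.symm hdec₁
          exact hnofut c₁ hc₁ (hS3 p hp c₁ (Or.inl hc₁) ⟨q', hq', hq'e⟩)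
        · exfalso
          have hq'P : IsPastSet r q'.1 := Stmt18Aux.PP_pastSet ht hd hq'1PP
          obtain ⟨c₂, hc₂F, hc₂pc⟩ := hq'1PP
          have hq'F : IsFutureSet r q'.2 := by rw [hq'2]; exact Stmt18Aux.isFutureSet_empty
          have hq'e : IsEndpoint r c₂ q' :=
            Stmt18Aux.endpoint_mk_fut hq'P hq'F hc₂F.1 hc₂pc.symm
              (by rw [hq'2, Stmt18Aux.decF_empty]; exact Set.empty_subset _)
          exact hnofut c₂ hc₂F.1 (hS3 p hp c₂ (Or.inl hc₂F.1) ⟨q', hq', hq'e⟩)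
        · have hq'F : IsFutureSet r q'.2 := Stmt18Aux.FF_futSet ht hd hq'2FF
          obtain ⟨c₂, hc₂P, hc₂fc⟩ := hq'2FF
          have hq'P : IsPastSet r q'.1 := by rw [hq'1]; exact Stmt18Aux.isPastSet_empty
          have hq'e : IsEndpoint r c₂ q' :=
            Stmt18Aux.endpoint_mk_past hq'P hq'F hc₂P.1 hc₂fc.symm
              (by rw [hq'1, Stmt18Aux.decP_empty]; exact Set.empty_subset _)
          have hpe := hS3 p hp c₂ (Or.inr hc₂P.1) ⟨q', hq', hq'e⟩
          have e2 : p.2 = q'.2 := by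
            rw [(Stmt18Aux.endpoint_elim_past ht hirr hc₂P.1 hpe).1, hc₂fc]
          exact Prod.ext (hq'1.trans hq1.symm) (e2.symm.trans hp2)
      have hsingle : S p = {q} := Set.eq_singleton_iff_unique_mem.2 ⟨hqSp, hunique⟩
      have hsame : ∀ c, IsChronChain r c → (IsEndpoint r c q ↔ IsEndpoint r c p) := by
        intro c hcc
        rcases hcc with hfc | hpc
        · constructor
          · intro hqe
            exfalso
            have e1 := (Stmt18Aux.endpoint_elim_fut ht hirr hfc hqe).1
            obtain ⟨x, hx⟩ := Stmt18Aux.pastOf_range_nonempty hfc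
            rw [← e1, hq1] at hx
            exact hx
          · intro hpe
            exact absurd hpe (hnofut c hfc)
        · constructor
          · intro hqe
            exact hS3 p hp c (Or.inr hpc) ⟨q, hqSp, hqe⟩
          · intro hpe
            have e1 := (Stmt18Aux.endpoint_elim_past ht hirr hpc hpe).1
            exact hq_end c hpc (by rw [← e1]; exact hp2)
      obtain ⟨hdP, -⟩ := hS4 p hp q hsingle hsame
      rw [hq1, Stmt18Aux.decP_empty] at hdP
      have hp1 : p.1 = ∅ :=
        Stmt18Aux.eq_empty_of_decP_empty ht hd hpPast (Set.subset_empty_iff.1 hdP)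
      exact Prod.ext (by rw [hp1, hq1]) hp2
  -- B is contained in the boundary of Xb'
  have hBsub : ∀ q ∈ B, q ∈ bdry r Xb' := by
    intro q hq
    obtain ⟨p, ⟨hpbd, hqSp⟩, -⟩ := hS2 q (by rw [hbdryXb]; exact hq)
    have hpq := hrig q hq p hpbd hqSp
    rw [← hpq]
    exact hpbd
  -- the boundary of Xb' is contained in B
  have hbdsub : ∀ p ∈ bdry r Xb', p ∈ B := by
    intro p hp
    have hnc := hXb'.2 p ⟨hp.1, hp.2⟩
    have h1 : Set.range (inj r) ⊆ Xb' \ {p} := by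
      intro x hx
      exact ⟨hXb'.1.1 hx, fun heq => hp.2 (heq ▸ hx)⟩
    have h2 : Xb' \ {p} ⊆ endSet r := fun q hq => hXb'.1.2.1 hq.1
    have h3 : ¬ ∀ c : ℕ → X, IsChronChain r c → ∃ q ∈ Xb' \ {p}, IsEndpoint r c q :=
      fun hall => hnc ⟨h1, h2, hall⟩
    push_neg at h3
    obtain ⟨c, hcc, hforall⟩ := h3
    have hpend : IsEndpoint r c p := by
      obtain ⟨q, hq, hqe⟩ := hXb'.1.2.2 c hcc
      by_cases hqp : q = p
      · rwa [← hqp]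
      · exact absurd hqe (hforall q ⟨hq, hqp⟩)
    have hnoinj : ¬ ∃ x, IsEndpoint r c (inj r x) := by
      rintro ⟨x, hx⟩
      have hxm : inj r x ∈ Xb' \ {p} :=
        ⟨hXb'.1.1 ⟨x, rfl⟩, fun heq => hp.2 (heq ▸ ⟨x, rfl⟩)⟩
      exact (hforall _ hxm) hx
    have hcov : ∃ b ∈ B, IsEndpoint r c b := by
      rcases hcc with hfc | hpc
      · exact hBcovF c ⟨hfc, hnoinj⟩
      · exact hBcovP c ⟨hpc, hnoinj⟩
    obtain ⟨b, hbB, hbend⟩ := hcov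
    obtain ⟨p'', ⟨hp''bd, hbS⟩, -⟩ := hS2 b (by rw [hbdryXb]; exact hbB)
    have hp''end : IsEndpoint r c p'' := hS3 p'' hp''bd c hcc ⟨b, hbS, hbend⟩
    have hp''p : p'' = p := by
      by_contra hne
      exact (hforall p'' ⟨hp''bd.1, hne⟩) hp''end
    rw [hp''p] at hbS
    have hpb := hrig b hbB p hp hbS
    rw [hpb]
    exact hbB
  have hbdry' : bdry r Xb' = B :=
    Set.Subset.antisymm (fun p hp => hbdsub p hp) (fun q hq => hBsub q hq)
  have hXb'eq : Xb' = Set.range (inj r) ∪ bdry r Xb' :=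
    (Set.union_diff_cancel hXb'.1.1).symm
  rw [hXb'eq, hbdry', hXbdef]
end
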